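/- Let d ≥ 1 be an integer, α ∈ (0, d), and let 1 < q ≤ p ≤ d. Let b : ℝ^d → [0,∞) be measurable, A ≥ 0, and assume ∫_B b^p dx ≤ A^p ρ^{d - pα} for every ρ > 0 and every ball B of radius ρ. If additionally b^q is an A_1-weight, i.e. 𝕄(b^q) ≤ C b^q almost everywhere for some constant C, then almost everywhere R_α(b^q) ≤ N A b^{q - 1}, where N depends only on α, d, q, p, C. -/

import Mathlib

open MeasureTheory Metric ENNReal
open scoped FourierTransform

/-- Riesz potential of an `ℝ≥0∞`-valued function:
`R_α g (x) = ∫ g(x+y) |y|^(α-d) dy`. -/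
noncomputable def riesz {d : ℕ} (α : ℝ) (g : EuclideanSpace ℝ (Fin d) → ℝ≥0∞)
    (x : EuclideanSpace ℝ (Fin d)) : ℝ≥0∞ :=
  ∫⁻ y, g (x + y) * ENNReal.ofReal (‖y‖ ^ (α - (d : ℝ)))

/-- Riesz potential of a real-valued function. -/
noncomputable def rieszR {d : ℕ} (α : ℝ) (f : EuclideanSpace ℝ (Fin d) → ℝ)
    (x : EuclideanSpace ℝ (Fin d)) : ℝ :=
  ∫ y, f (x + y) * ‖y‖ ^ (α - (d : ℝ))

/-- Hardy–Littlewood maximal function: sup over balls containing `x`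
of the average of `g` over the ball. -/
noncomputable def maxFun {d : ℕ} (g : EuclideanSpace ℝ (Fin d) → ℝ≥0∞)
    (x : EuclideanSpace ℝ (Fin d)) : ℝ≥0∞ :=
  ⨆ (z : EuclideanSpace ℝ (Fin d)) (r : ℝ) (_ : x ∈ ball z r),
    (∫⁻ y in ball z r, g y) / volume (ball z r)

/-! Hedberg's argument. Cut the integral defining `R_α (b^q) x` into dyadic annuli around `x`:
on the annulus `r ≤ |y| < 2r` the kernel is at most `r^(α-d)`, so that piece is controlled by the
mass of `b^q` on the ball `B(x, 2r)`. For small radii the `A_1` condition bounds this mass by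
`C b(x)^q r^d`; for large radii Hölder's inequality and the Morrey condition bound it by
`A^q r^(d-qα)`. Summing the two geometric series below and above a radius `R` gives
`R_α (b^q) x ≲ b(x)^q R^α + A^q R^(α(1-q))`, and `R = (A / b(x))^(1/α)` makes both terms equal
to `A b(x)^(q-1)`. -/

lemma exists_two_inv_pow_succ_le_lt {t : ℝ} (ht : 0 < t) (ht1 : t < 1) :
    ∃ j : ℕ, (2⁻¹ : ℝ) ^ (j + 1) ≤ t ∧ t < 2⁻¹ ^ j := by
  classical
  have hex : ∃ j : ℕ, (2⁻¹ : ℝ) ^ (j + 1) ≤ t := by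
    obtain ⟨j, hj⟩ := exists_pow_lt_of_lt_one ht (by norm_num : (2⁻¹ : ℝ) < 1)
    exact ⟨j, (pow_le_pow_of_le_one (by norm_num) (by norm_num) j.le_succ).trans hj.le⟩
  refine ⟨Nat.find hex, Nat.find_spec hex, ?_⟩
  rcases h : Nat.find hex with _ | j
  · simpa using ht1
  · simpa using Nat.find_min hex (h ▸ j.lt_succ_self)

lemma tsum_ofReal_mul_pow_rpow {a c : ℝ} (ha : 0 ≤ a) (hc : 0 ≤ c) (γ : ℝ) :
    ∑' j : ℕ, ENNReal.ofReal ((a * c ^ j) ^ γ) =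
      ENNReal.ofReal (a ^ γ) * (1 - ENNReal.ofReal (c ^ γ))⁻¹ := by
  have hterm : ∀ j : ℕ, ENNReal.ofReal ((a * c ^ j) ^ γ) =
      ENNReal.ofReal (a ^ γ) * ENNReal.ofReal (c ^ γ) ^ j := fun j => by
    rw [Real.mul_rpow ha (pow_nonneg hc j), ← Real.rpow_pow_comm hc,
      ENNReal.ofReal_mul (by positivity), ENNReal.ofReal_pow (by positivity)]
  simp_rw [hterm, ENNReal.tsum_mul_left, ENNReal.tsum_geometric]

section DyadicShells

variable {E : Type*} [NormedAddCommGroup E] [MeasurableSpace E] [OpensMeasurableSpace E]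
  {μ : Measure E} {f : E → ℝ≥0∞} {K : ℝ≥0∞} {β s R : ℝ}

lemma setLIntegral_annulus_mul_rpow_norm_le (hβ : β ≤ 0)
    (hK : ∀ ρ > 0, ∫⁻ y in ball 0 ρ, f y ∂μ ≤ K * ENNReal.ofReal (ρ ^ s)) {r : ℝ} (hr : 0 < r) :
    ∫⁻ y in ball 0 (2 * r) \ ball 0 r, f y * ENNReal.ofReal (‖y‖ ^ β) ∂μ ≤
      K * ENNReal.ofReal (2 ^ s) * ENNReal.ofReal (r ^ (β + s)) := by
  have hweight : ∀ y ∈ ball (0 : E) (2 * r) \ ball 0 r,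
      f y * ENNReal.ofReal (‖y‖ ^ β) ≤ ENNReal.ofReal (r ^ β) * f y := fun y hy => by
    have hry : r ≤ ‖y‖ := by simpa using hy.2
    rw [mul_comm]
    exact mul_le_mul_left (ENNReal.ofReal_le_ofReal (Real.rpow_le_rpow_of_nonpos hr hry hβ)) _
  calc ∫⁻ y in ball 0 (2 * r) \ ball 0 r, f y * ENNReal.ofReal (‖y‖ ^ β) ∂μ
      ≤ ∫⁻ y in ball 0 (2 * r) \ ball 0 r, ENNReal.ofReal (r ^ β) * f y ∂μ :=
        setLIntegral_mono' (measurableSet_ball.diff measurableSet_ball) hweight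
    _ = ENNReal.ofReal (r ^ β) * ∫⁻ y in ball 0 (2 * r) \ ball 0 r, f y ∂μ :=
        lintegral_const_mul' _ _ ENNReal.ofReal_ne_top
    _ ≤ ENNReal.ofReal (r ^ β) * (K * ENNReal.ofReal ((2 * r) ^ s)) := by
        gcongr
        exact (lintegral_mono_set Set.sdiff_subset).trans (hK _ (by positivity))
    _ = K * ENNReal.ofReal (2 ^ s) * ENNReal.ofReal (r ^ (β + s)) := by
        rw [Real.mul_rpow zero_le_two hr.le, Real.rpow_add hr,
          ENNReal.ofReal_mul (by positivity), ENNReal.ofReal_mul (by positivity)]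
        ring

lemma setLIntegral_mul_rpow_norm_le_tsum (hβ : β < 0)
    (hK : ∀ ρ > 0, ∫⁻ y in ball 0 ρ, f y ∂μ ≤ K * ENNReal.ofReal (ρ ^ s))
    {S : Set E} {r : ℕ → ℝ} (hr : ∀ j, 0 < r j)
    (hS : ∀ y ∈ S, y ≠ 0 → ∃ j, r j ≤ ‖y‖ ∧ ‖y‖ < 2 * r j) :
    ∫⁻ y in S, f y * ENNReal.ofReal (‖y‖ ^ β) ∂μ ≤
      K * ENNReal.ofReal (2 ^ s) * ∑' j, ENNReal.ofReal (r j ^ (β + s)) := by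
  set F := fun y => f y * ENNReal.ofReal (‖y‖ ^ β)
  set shell := fun j => ball (0 : E) (2 * r j) \ ball 0 (r j)
  have hcover : S ⊆ insert 0 (⋃ j, shell j) := fun y hy => by
    by_cases hy0 : y = 0
    · exact Or.inl hy0
    · obtain ⟨j, hj⟩ := hS y hy hy0
      exact Or.inr (Set.mem_iUnion.2 ⟨j, by simpa [shell] using hj.2, by simpa [shell] using hj.1⟩)
  -- the origin lies in no shell, but the junk value `0 ^ β = 0` (β ≠ 0) kills the weight there
  have hF0 : F 0 = 0 := by simp [F, Real.zero_rpow hβ.ne]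
  calc ∫⁻ y in S, F y ∂μ ≤ ∫⁻ y in {0} ∪ ⋃ j, shell j, F y ∂μ := lintegral_mono_set hcover
    _ ≤ ∫⁻ y in ⋃ j, shell j, F y ∂μ := by
        simpa [hF0] using lintegral_union_le F {0} (⋃ j, shell j)
    _ ≤ ∑' j, ∫⁻ y in shell j, F y ∂μ := lintegral_iUnion_le _ _
    _ ≤ ∑' j, K * ENNReal.ofReal (2 ^ s) * ENNReal.ofReal (r j ^ (β + s)) :=
        ENNReal.tsum_le_tsum fun j => setLIntegral_annulus_mul_rpow_norm_le hβ.le hK (hr j)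
    _ = K * ENNReal.ofReal (2 ^ s) * ∑' j, ENNReal.ofReal (r j ^ (β + s)) := ENNReal.tsum_mul_left

lemma setLIntegral_ball_mul_rpow_norm_le (hβ : β < 0)
    (hK : ∀ ρ > 0, ∫⁻ y in ball 0 ρ, f y ∂μ ≤ K * ENNReal.ofReal (ρ ^ s)) (hR : 0 < R) :
    ∫⁻ y in ball 0 R, f y * ENNReal.ofReal (‖y‖ ^ β) ∂μ ≤
      K * ENNReal.ofReal (2 ^ s) * (ENNReal.ofReal ((R / 2) ^ (β + s)) *
        (1 - ENNReal.ofReal ((2⁻¹ : ℝ) ^ (β + s)))⁻¹) := by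
  rw [← tsum_ofReal_mul_pow_rpow (by positivity) (by norm_num)]
  refine setLIntegral_mul_rpow_norm_le_tsum hβ hK (fun j => by positivity) fun y hy hy0 => ?_
  obtain ⟨j, hj⟩ := exists_two_inv_pow_succ_le_lt (div_pos (norm_pos_iff.2 hy0) hR)
    ((div_lt_one hR).2 (mem_ball_zero_iff.1 hy))
  refine ⟨j, ?_, ?_⟩
  · rw [le_div_iff₀ hR, pow_succ] at hj
    linarith [hj.1]
  · rw [div_lt_iff₀ hR] at hj
    linarith [hj.2]

lemma setLIntegral_compl_ball_mul_rpow_norm_le (hβ : β < 0)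
    (hK : ∀ ρ > 0, ∫⁻ y in ball 0 ρ, f y ∂μ ≤ K * ENNReal.ofReal (ρ ^ s)) (hR : 0 < R) :
    ∫⁻ y in (ball 0 R)ᶜ, f y * ENNReal.ofReal (‖y‖ ^ β) ∂μ ≤
      K * ENNReal.ofReal (2 ^ s) * (ENNReal.ofReal (R ^ (β + s)) *
        (1 - ENNReal.ofReal ((2 : ℝ) ^ (β + s)))⁻¹) := by
  rw [← tsum_ofReal_mul_pow_rpow hR.le zero_le_two]
  refine setLIntegral_mul_rpow_norm_le_tsum hβ hK (fun j => by positivity) fun y hy _ => ?_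
  obtain ⟨j, hj⟩ := exists_nat_pow_near ((one_le_div hR).2 (by simpa using hy)) one_lt_two
  refine ⟨j, ?_, ?_⟩
  · rw [le_div_iff₀ hR] at hj
    linarith [hj.1]
  · rw [div_lt_iff₀ hR, pow_succ] at hj
    linarith [hj.2]

end DyadicShells

lemma lintegral_rpow_le_lintegral_rpow_mul_measure_univ {X : Type*} [MeasurableSpace X]
    {μ : Measure X} {f : X → ℝ≥0∞} (hf : AEMeasurable f μ) {q p : ℝ} (hq : 0 < q) (hqp : q ≤ p) :
    ∫⁻ x, f x ^ q ∂μ ≤ (∫⁻ x, f x ^ p ∂μ) ^ (q / p) * μ Set.univ ^ (1 - q / p) := by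
  have h := ENNReal.rpow_le_rpow
    (eLpNorm'_le_eLpNorm'_mul_rpow_measure_univ hq hqp hf.aestronglyMeasurable) hq.le
  simp only [eLpNorm'_eq_lintegral_enorm, enorm_eq_self] at h
  rw [ENNReal.mul_rpow_of_nonneg _ _ hq.le, ← ENNReal.rpow_mul, ← ENNReal.rpow_mul,
    ← ENNReal.rpow_mul] at h
  have e₁ : 1 / q * q = 1 := one_div_mul_cancel hq.ne'
  have e₂ : 1 / p * q = q / p := by ring
  have e₃ : (1 / q - 1 / p) * q = 1 - q / p := by field_simp
  rwa [e₁, e₂, e₃, ENNReal.rpow_one] at h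

lemma setLIntegral_ball_zero_comp_add {G : Type*} [NormedAddCommGroup G] [MeasurableSpace G]
    [BorelSpace G] {μ : Measure G} [μ.IsAddLeftInvariant] (g : G → ℝ≥0∞) (x : G) (ρ : ℝ) :
    ∫⁻ y in ball 0 ρ, g (x + y) ∂μ = ∫⁻ y in ball x ρ, g y ∂μ := by
  have hpre : ball (0 : G) ρ = (x + ·) ⁻¹' ball x ρ := by simp
  rw [hpre, (measurePreserving_add_left μ x).setLIntegral_comp_preimage_emb
    (MeasurableEquiv.addLeft x).measurableEmbedding]

lemma setLIntegral_ball_le_maxFun {d : ℕ} (g : EuclideanSpace ℝ (Fin d) → ℝ≥0∞)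
    (x : EuclideanSpace ℝ (Fin d)) {ρ : ℝ} (hρ : 0 < ρ) :
    ∫⁻ y in ball x ρ, g y ≤ volume (ball (0 : EuclideanSpace ℝ (Fin d)) 1) * maxFun g x *
      ENNReal.ofReal (ρ ^ (d : ℝ)) := by
  have h : (∫⁻ y in ball x ρ, g y) / volume (ball x ρ) ≤ maxFun g x :=
    le_iSup₂_of_le x ρ (le_iSup_of_le (mem_ball_self hρ) le_rfl)
  rw [ENNReal.div_le_iff_le_mul (Or.inl (measure_ball_pos volume x hρ).ne')
    (Or.inl measure_ball_lt_top.ne)] at h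
  rw [Measure.addHaar_ball_of_pos _ _ hρ, finrank_euclideanSpace_fin, ← Real.rpow_natCast] at h
  exact h.trans_eq (by ring)

lemma setLIntegral_ball_rpow_le_of_morrey {d : ℕ} {α q p A ρ : ℝ} (hq : 0 < q) (hqp : q ≤ p)
    (hA : 0 ≤ A) (hρ : 0 < ρ) {b : EuclideanSpace ℝ (Fin d) → ℝ} (hb : Measurable b)
    (hbnn : ∀ x, 0 ≤ b x) {z : EuclideanSpace ℝ (Fin d)}
    (hM : ∫⁻ y in ball z ρ, ENNReal.ofReal (b y ^ p) ≤
      ENNReal.ofReal (A ^ p * ρ ^ ((d : ℝ) - p * α))) :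
    ∫⁻ y in ball z ρ, ENNReal.ofReal (b y ^ q) ≤
      volume (ball (0 : EuclideanSpace ℝ (Fin d)) 1) ^ (1 - q / p) * ENNReal.ofReal (A ^ q) *
        ENNReal.ofReal (ρ ^ ((d : ℝ) - q * α)) := by
  have hp : 0 < p := hq.trans_le hqp
  have hqp' : 0 ≤ 1 - q / p := sub_nonneg.2 ((div_le_one hp).2 hqp)
  have hpow : ∀ r : ℝ, 0 < r → ∀ y, ENNReal.ofReal (b y ^ r) = ENNReal.ofReal (b y) ^ r :=
    fun r hr y => (ENNReal.ofReal_rpow_of_nonneg (hbnn y) hr.le).symm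
  have hexp : ((d : ℝ) - p * α) * (q / p) + d * (1 - q / p) = d - q * α := by
    field_simp
    ring
  simp only [hpow q hq, hpow p hp] at hM ⊢
  calc ∫⁻ y in ball z ρ, ENNReal.ofReal (b y) ^ q
      ≤ (∫⁻ y in ball z ρ, ENNReal.ofReal (b y) ^ p) ^ (q / p) *
          volume (ball z ρ) ^ (1 - q / p) := by
        simpa using lintegral_rpow_le_lintegral_rpow_mul_measure_univ
          (μ := volume.restrict (ball z ρ)) hb.ennreal_ofReal.aemeasurable hq hqp
    _ ≤ ENNReal.ofReal (A ^ p * ρ ^ ((d : ℝ) - p * α)) ^ (q / p) *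
          (ENNReal.ofReal (ρ ^ d) * volume (ball (0 : EuclideanSpace ℝ (Fin d)) 1)) ^
            (1 - q / p) := by
        rw [Measure.addHaar_ball_of_pos _ _ hρ, finrank_euclideanSpace_fin]
        gcongr
    _ = volume (ball (0 : EuclideanSpace ℝ (Fin d)) 1) ^ (1 - q / p) * ENNReal.ofReal (A ^ q) *
          ENNReal.ofReal (ρ ^ ((d : ℝ) - q * α)) := by
        rw [ENNReal.mul_rpow_of_nonneg _ _ hqp', ENNReal.ofReal_rpow_of_nonneg (by positivity)
          (by positivity), ENNReal.ofReal_rpow_of_nonneg (by positivity) hqp',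
          Real.mul_rpow (by positivity) (by positivity), ← Real.rpow_mul hA,
          mul_div_cancel₀ _ hp.ne', ← Real.rpow_natCast, ← Real.rpow_mul hρ.le,
          ← Real.rpow_mul hρ.le, ← hexp, Real.rpow_add hρ, ENNReal.ofReal_mul (by positivity),
          ENNReal.ofReal_mul (by positivity)]
        ring

theorem exists_riesz_le_add_of_growth {d : ℕ} {α s : ℝ} (hα : 0 < α) (hαd : α < d)
    (hs : s < d - α) :
    ∃ c₁ c₂ : ℝ≥0∞, c₁ ≠ ⊤ ∧ c₂ ≠ ⊤ ∧
      ∀ (g : EuclideanSpace ℝ (Fin d) → ℝ≥0∞) (x : EuclideanSpace ℝ (Fin d)) (K₁ K₂ : ℝ≥0∞),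
        (∀ ρ > 0, ∫⁻ y in ball x ρ, g y ≤ K₁ * ENNReal.ofReal (ρ ^ (d : ℝ))) →
        (∀ ρ > 0, ∫⁻ y in ball x ρ, g y ≤ K₂ * ENNReal.ofReal (ρ ^ s)) →
        ∀ R > 0, riesz α g x ≤
          c₁ * K₁ * ENNReal.ofReal (R ^ α) + c₂ * K₂ * ENNReal.ofReal (R ^ (α - d + s)) := by
  have hβ : α - d < 0 := sub_neg.2 hαd
  have hratio₁ : ENNReal.ofReal ((2⁻¹ : ℝ) ^ α) < 1 :=
    ENNReal.ofReal_lt_one.2 (Real.rpow_lt_one (by norm_num) (by norm_num) hα)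
  have hratio₂ : ENNReal.ofReal ((2 : ℝ) ^ (α - d + s)) < 1 :=
    ENNReal.ofReal_lt_one.2 (Real.rpow_lt_one_of_one_lt_of_neg one_lt_two (by linarith))
  refine ⟨ENNReal.ofReal (2 ^ (d : ℝ)) * ENNReal.ofReal ((2⁻¹ : ℝ) ^ α) *
      (1 - ENNReal.ofReal ((2⁻¹ : ℝ) ^ α))⁻¹,
    ENNReal.ofReal (2 ^ s) * (1 - ENNReal.ofReal ((2 : ℝ) ^ (α - d + s)))⁻¹,
    by finiteness [(tsub_pos_of_lt hratio₁).ne'], by finiteness [(tsub_pos_of_lt hratio₂).ne'], ?_⟩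
  intro g x K₁ K₂ h₁ h₂ R hR
  simp only [← setLIntegral_ball_zero_comp_add g x] at h₁ h₂
  rw [riesz, ← lintegral_add_compl _ (measurableSet_ball (x := 0) (ε := R))]
  have e : α - d + d = α := by ring
  gcongr
  · refine (setLIntegral_ball_mul_rpow_norm_le hβ h₁ hR).trans_eq ?_
    rw [e, div_eq_mul_inv, Real.mul_rpow hR.le (by norm_num), ENNReal.ofReal_mul (by positivity)]
    ring
  · refine (setLIntegral_compl_ball_mul_rpow_norm_le hβ h₂ hR).trans_eq ?_
    ring

lemma riesz_eq_zero_of_setLIntegral_ball_eq_zero {d : ℕ} {α : ℝ} (hα : 0 < α) (hαd : α < d)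
    {g : EuclideanSpace ℝ (Fin d) → ℝ≥0∞} {x : EuclideanSpace ℝ (Fin d)}
    (hg : ∀ ρ > 0, ∫⁻ y in ball x ρ, g y = 0) :
    riesz α g x = 0 := by
  obtain ⟨c₁, c₂, -, -, hle⟩ := exists_riesz_le_add_of_growth (s := d - α - 1) hα hαd (by linarith)
  have hzero : ∀ {s : ℝ}, ∀ ρ > 0, ∫⁻ y in ball x ρ, g y ≤ 0 * ENNReal.ofReal (ρ ^ s) :=
    fun ρ hρ => by simp [hg ρ hρ]
  simpa using hle g x 0 0 hzero hzero 1 one_pos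

theorem exists_riesz_le_of_growth {d : ℕ} {α q : ℝ} (hα : 0 < α) (hαd : α < d) (hq : 1 < q) :
    ∃ c₁ c₂ : ℝ≥0∞, c₁ ≠ ⊤ ∧ c₂ ≠ ⊤ ∧
      ∀ (g : EuclideanSpace ℝ (Fin d) → ℝ≥0∞) (x : EuclideanSpace ℝ (Fin d)) (K₁ K₂ : ℝ≥0∞)
        {a A : ℝ}, 0 ≤ a → 0 ≤ A →
        (∀ ρ > 0, ∫⁻ y in ball x ρ, g y ≤
          K₁ * ENNReal.ofReal (a ^ q) * ENNReal.ofReal (ρ ^ (d : ℝ))) →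
        (∀ ρ > 0, ∫⁻ y in ball x ρ, g y ≤
          K₂ * ENNReal.ofReal (A ^ q) * ENNReal.ofReal (ρ ^ ((d : ℝ) - q * α))) →
        riesz α g x ≤ (c₁ * K₁ + c₂ * K₂) * ENNReal.ofReal (A * a ^ (q - 1)) := by
  obtain ⟨c₁, c₂, hc₁, hc₂, hle⟩ :=
    exists_riesz_le_add_of_growth (s := d - q * α) hα hαd (by nlinarith)
  refine ⟨c₁, c₂, hc₁, hc₂, fun g x K₁ K₂ a A ha hA h₁ h₂ => ?_⟩
  have hq0 : q ≠ 0 := by positivity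
  by_cases hdeg : a = 0 ∨ A = 0
  · have hzero : ∀ ρ > 0, ∫⁻ y in ball x ρ, g y = 0 := fun ρ hρ => by
      rcases hdeg with rfl | rfl
      · simpa [Real.zero_rpow hq0] using h₁ ρ hρ
      · simpa [Real.zero_rpow hq0] using h₂ ρ hρ
    simp [riesz_eq_zero_of_setLIntegral_ball_eq_zero hα hαd hzero]
  push Not at hdeg
  have ha' : 0 < a := ha.lt_of_ne' hdeg.1
  have hA' : 0 < A := hA.lt_of_ne' hdeg.2
  set R := (A / a) ^ α⁻¹
  have hRα : R ^ α = A / a := Real.rpow_inv_rpow (by positivity) hα.ne'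
  have hRs : R ^ (α - d + (d - q * α)) = (A / a) ^ (1 - q) := by
    rw [← Real.rpow_mul (by positivity)]
    congr 1
    field_simp
    ring
  have hnear : a ^ q * (A / a) = A * a ^ (q - 1) := by
    rw [Real.rpow_sub ha', Real.rpow_one]
    ring
  have hfar : A ^ q * (A / a) ^ (1 - q) = A * a ^ (q - 1) := by
    rw [Real.div_rpow hA ha, mul_div_assoc', ← Real.rpow_add hA', add_sub_cancel,
      Real.rpow_one, div_eq_mul_inv, ← Real.rpow_neg ha, neg_sub]
  calc riesz α g x
      ≤ c₁ * (K₁ * ENNReal.ofReal (a ^ q)) * ENNReal.ofReal (R ^ α) +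
          c₂ * (K₂ * ENNReal.ofReal (A ^ q)) * ENNReal.ofReal (R ^ (α - d + (d - q * α))) :=
        hle g x _ _ h₁ h₂ R (by positivity)
    _ = c₁ * K₁ * ENNReal.ofReal (a ^ q * (A / a)) +
          c₂ * K₂ * ENNReal.ofReal (A ^ q * (A / a) ^ (1 - q)) := by
        rw [hRα, hRs, ENNReal.ofReal_mul (by positivity), ENNReal.ofReal_mul (by positivity)]
        ring
    _ = (c₁ * K₁ + c₂ * K₂) * ENNReal.ofReal (A * a ^ (q - 1)) := by
        rw [hnear, hfar]
        ring

theorem riesz_pow_le_of_A1_general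
    (d : ℕ) (α q p : ℝ) (hα0 : 0 < α) (hαd : α < d)
    (hq : 1 < q) (hqp : q ≤ p) (C : ℝ) :
    ∃ N : ℝ, 0 < N ∧
      ∀ b : EuclideanSpace ℝ (Fin d) → ℝ, Measurable b → (∀ x, 0 ≤ b x) →
      ∀ A : ℝ, 0 ≤ A →
      (∀ (x : EuclideanSpace ℝ (Fin d)) (ρ : ℝ), 0 < ρ →
        ∫⁻ y in ball x ρ, ENNReal.ofReal (b y ^ p) ≤
          ENNReal.ofReal (A ^ p * ρ ^ ((d : ℝ) - p * α))) →
      (∀ᵐ x ∂(volume : Measure (EuclideanSpace ℝ (Fin d))),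
        maxFun (fun y => ENNReal.ofReal (b y ^ q)) x ≤
          ENNReal.ofReal (C * b x ^ q)) →
      ∀ᵐ x ∂(volume : Measure (EuclideanSpace ℝ (Fin d))),
        riesz α (fun y => ENNReal.ofReal (b y ^ q)) x ≤
          ENNReal.ofReal (N * A * b x ^ (q - 1)) := by
  obtain ⟨c₁, c₂, hc₁, hc₂, hedberg⟩ := exists_riesz_le_of_growth hα0 hαd hq
  set v₁ := volume (ball (0 : EuclideanSpace ℝ (Fin d)) 1)
  set D := c₁ * (v₁ * ENNReal.ofReal C) + c₂ * v₁ ^ (1 - q / p)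
  have hD : D ≠ ⊤ := by
    have hv₁ : v₁ ≠ ⊤ := measure_ball_lt_top.ne
    have := ENNReal.rpow_ne_top_of_nonneg (sub_nonneg.2 ((div_le_one (by linarith)).2 hqp)) hv₁
    finiteness
  refine ⟨D.toReal + 1, by positivity, fun b hb hbnn A hA hM hmax => ?_⟩
  filter_upwards [hmax] with x hx
  rw [ENNReal.ofReal_mul' (Real.rpow_nonneg (hbnn x) q)] at hx
  have hnear : ∀ ρ > 0, ∫⁻ y in ball x ρ, ENNReal.ofReal (b y ^ q) ≤
      v₁ * ENNReal.ofReal C * ENNReal.ofReal (b x ^ q) * ENNReal.ofReal (ρ ^ (d : ℝ)) :=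
    fun ρ hρ => (setLIntegral_ball_le_maxFun _ x hρ).trans <| by
      rw [mul_assoc v₁ (ENNReal.ofReal C)]
      gcongr
  calc riesz α (fun y => ENNReal.ofReal (b y ^ q)) x
      ≤ D * ENNReal.ofReal (A * b x ^ (q - 1)) :=
        hedberg _ x _ _ (hbnn x) hA hnear fun ρ hρ =>
          setLIntegral_ball_rpow_le_of_morrey (by linarith) hqp hA hρ hb hbnn (hM x ρ hρ)
    _ ≤ ENNReal.ofReal ((D.toReal + 1) * A * b x ^ (q - 1)) := by
        rw [mul_assoc, ENNReal.ofReal_mul (by positivity : 0 ≤ D.toReal + 1)]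
        gcongr
        exact (ENNReal.le_ofReal_iff_toReal_le hD (by positivity)).2 (by linarith)

/-- If `b` satisfies the Morrey condition with exponent `p`, `1 < q ≤ p ≤ d`, and
`b^q` is an `A_1`-weight (`𝕄(b^q) ≤ C b^q` a.e.), then a.e.
`R_α(b^q) ≤ N A b^(q-1)` with `N = N(α,d,q,p,C)`. -/
theorem riesz_pow_le_of_A1
    (d : ℕ) (hd : 1 ≤ d) (α q p : ℝ) (hα0 : 0 < α) (hαd : α < d)
    (hq : 1 < q) (hqp : q ≤ p) (hpd : p ≤ d) (C : ℝ) :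
    ∃ N : ℝ, 0 < N ∧
      ∀ b : EuclideanSpace ℝ (Fin d) → ℝ, Measurable b → (∀ x, 0 ≤ b x) →
      ∀ A : ℝ, 0 ≤ A →
      (∀ (x : EuclideanSpace ℝ (Fin d)) (ρ : ℝ), 0 < ρ →
        ∫⁻ y in ball x ρ, ENNReal.ofReal (b y ^ p) ≤
          ENNReal.ofReal (A ^ p * ρ ^ ((d : ℝ) - p * α))) →
      (∀ᵐ x ∂(volume : Measure (EuclideanSpace ℝ (Fin d))),
        maxFun (fun y => ENNReal.ofReal (b y ^ q)) x ≤
          ENNReal.ofReal (C * b x ^ q)) →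
      ∀ᵐ x ∂(volume : Measure (EuclideanSpace ℝ (Fin d))),
        riesz α (fun y => ENNReal.ofReal (b y ^ q)) x ≤
          ENNReal.ofReal (N * A * b x ^ (q - 1)) :=
  riesz_pow_le_of_A1_general d α q p hα0 hαd hq hqp C
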